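/- Let a ∈ F with a ≠ 0 and a ≠ 1, let c ∈ {0,1} ⊆ F be the image of the natural number m in F (so c = 0 if m is even and c = 1 if m is odd), and set C = χ_n(μ·ā·a⁻¹) − χ_n(μ·(ā+1)·(a+1)⁻¹) ∈ ℤ. Then W_g(a) = 2^(m−1)·(C − 2) if Tr_n(a) = c and Tr_m(a·ā) = 0; W_g(a) = 2^(m−1)·(C + 2) if Tr_n(a) = c and Tr_m(a·ā) = 1; and W_g(a) = 2^(m−1)·C if Tr_n(a) ≠ c. -/

import Mathlib

open Finset

/-- Absolute trace-style sum `Tr_n : F → F` for `n = 2m`. -/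
def trN (m : ℕ) {F : Type*} [Field F] (x : F) : F :=
  ∑ i ∈ Finset.range (2 * m), x ^ (2 ^ i)

/-- Trace-style sum `Tr_m : F → F` (meant for elements of the subfield `K`). -/
def trM (m : ℕ) {F : Type*} [Field F] (x : F) : F :=
  ∑ i ∈ Finset.range m, x ^ (2 ^ i)

/-- `ε(0) = 1`, `ε(t) = -1` for `t ≠ 0`. -/
def eps {F : Type*} [Field F] [DecidableEq F] (t : F) : ℤ :=
  if t = 0 then 1 else -1

/-- Kloosterman sum `k_m(μ) = ∑_{x ∈ K, x ≠ 0} χ_m(x + μ x⁻¹)`. -/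
def klooM (m : ℕ) {F : Type*} [Field F] [Fintype F] [DecidableEq F] (μ : F) : ℤ :=
  ∑ x ∈ Finset.univ.filter (fun x : F => x ^ (2 ^ m) = x ∧ x ≠ 0),
    eps (trM m (x + μ * x⁻¹))

/-- Kloosterman sum over the big field: `k_n(μ) = ∑_{x ∈ F, x ≠ 0} χ_n(x + μ x⁻¹)`. -/
def klooN (m : ℕ) {F : Type*} [Field F] [Fintype F] [DecidableEq F] (μ : F) : ℤ :=
  ∑ x ∈ Finset.univ.filter (fun x : F => x ≠ 0), eps (trN m (x + μ * x⁻¹))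

/-- Walsh transform of `h : F → F` (with values in `{0,1}`) at `a`. -/
def walsh (m : ℕ) {F : Type*} [Field F] [Fintype F] [DecidableEq F] (h : F → F) (a : F) : ℤ :=
  ∑ x : F, eps (h x + trN m (a * x))

/-- The Boolean function `f_{λ,μ}(x) = Tr_n(λ x^{2^m+1}) + Tr_n(x)·Tr_n(μ x^{2^m-1})`. -/
def fFun (m : ℕ) {F : Type*} [Field F] (l μ : F) : F → F :=
  fun x => trN m (l * x ^ (2 ^ m + 1)) + trN m x * trN m (μ * x ^ (2 ^ m - 1))

/-- The Boolean function
`g_{λ,μ}(x) = (1 + Tr_n(x))·Tr_n(λ x^{2^m+1}) + Tr_n(x)·Tr_n(μ x^{2^m-1})`. -/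
def gFun (m : ℕ) {F : Type*} [Field F] (l μ : F) : F → F :=
  fun x => (1 + trN m x) * trN m (l * x ^ (2 ^ m + 1)) +
    trN m x * trN m (μ * x ^ (2 ^ m - 1))

/-!
Write `q = 2 ^ m` and `x̄ = x ^ q`. Since `Tr_n((a + 1) x) = Tr_n(a x) + Tr_n(x)`, comparing the
transforms at `a` and `a + 1` isolates the two halves of `g`:
`2 W_g(a) = S₁(a) + S₁(a + 1) + S₂(a) - S₂(a + 1)` with `S₁(b) = ∑ χ_n(λ x^{q+1} + b x)` and
`S₂(b) = ∑ χ_n(μ x^{q-1} + b x)`.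

As `λ + λ̄ = 1`, `Tr_n(λ x^{q+1}) = Tr_m(x^{q+1})`, and completing the norm gives
`S₁(b) = χ_m(b b̄) ∑_y χ_m(y^{q+1}) = -q χ_m(b b̄)`; the last sum is computed from the polar
decomposition `F^* = K^* × U`, `U = {u : u^{q+1} = 1}`, and the balance of `Tr_m` on `K`.
For `S₂` write `x = z u` with `z ∈ K^*`, `u ∈ U`: then `x^{q-1} = u^{q-1}` and
`Tr_n(b x) = Tr_m(z c)` with `c = b u + b̄ ū ∈ K`, so summing over `z` kills every `u` except the
unique one with `c = 0`, i.e. `u² = b̄ / b`, and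
`S₂(b) = 1 + q χ_n(μ b̄ / b) - ∑_{u ∈ U} χ_n(μ u^{q-1})`, whose last term does not depend on `b`
and cancels. Finally `Tr_m((a + 1)(ā + 1)) = Tr_m(a ā) + Tr_n(a) + m`.
-/

open Polynomial

section Field

variable {F : Type*} [Field F]

@[simp]
theorem trM_zero (k : ℕ) : trM k (0 : F) = 0 := by
  simp [trM]

@[simp]
theorem trN_zero (m : ℕ) : trN m (0 : F) = 0 :=
  trM_zero (2 * m)

@[simp]
theorem trM_one (k : ℕ) : trM k (1 : F) = k := by
  simp [trM]

theorem eval_sum_X_pow_two_pow (m : ℕ) (x : F) :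
    (∑ i ∈ range m, X ^ 2 ^ i : F[X]).eval x = trM m x := by
  simp [eval_finsetSum, trM]

theorem trM_sq_of_pow_eq {k : ℕ} {x : F} (hx : x ^ 2 ^ k = x) : trM k (x ^ 2) = trM k x := by
  have shift := (sum_range_succ (fun i ↦ x ^ 2 ^ i) k).symm.trans
    (sum_range_succ' (fun i ↦ x ^ 2 ^ i) k)
  simp only [hx, pow_zero, pow_one, add_left_inj] at shift
  rw [trM, trM, shift]
  exact sum_congr rfl fun i _ ↦ by rw [← pow_mul, pow_succ, mul_comm]

variable [DecidableEq F]

@[simp]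
theorem eps_zero : eps (0 : F) = 1 := if_pos rfl

theorem eps_of_ne_zero {t : F} (ht : t ≠ 0) : eps t = -1 := if_neg ht

@[simp]
theorem eps_one : eps (1 : F) = -1 := eps_of_ne_zero one_ne_zero

end Field

section CharTwo

variable {F : Type*} [Field F] [CharP F 2]

theorem trM_add (k : ℕ) (x y : F) : trM k (x + y) = trM k x + trM k y := by
  simp only [trM, add_pow_char_pow, sum_add_distrib]

theorem trN_add (m : ℕ) (x y : F) : trN m (x + y) = trN m x + trN m y :=
  trM_add (2 * m) x y

theorem trM_sq (k : ℕ) (x : F) : trM k x ^ 2 = trM k (x ^ 2) := by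
  simp only [trM, CharTwo.sum_sq, ← pow_mul, mul_comm]

theorem isIdempotentElem_trM {k : ℕ} {x : F} (hx : x ^ 2 ^ k = x) :
    IsIdempotentElem (trM k x) := by
  rw [IsIdempotentElem, ← sq, trM_sq, trM_sq_of_pow_eq hx]

theorem trN_eq_trM_add_pow (m : ℕ) (x : F) : trN m x = trM m (x + x ^ 2 ^ m) := by
  rw [trM_add, trN, two_mul, sum_range_add]
  simp only [trM, ← pow_mul, ← pow_add]

theorem trM_add_one_mul_pow_add_one (m : ℕ) (a : F) :
    trM m ((a + 1) * (a + 1) ^ 2 ^ m) = trM m (a * a ^ 2 ^ m) + (trN m a + m) := by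
  rw [add_pow_char_pow, one_pow, trN_eq_trM_add_pow, ← trM_one m, ← trM_add, ← trM_add]
  congr 1
  ring

theorem isIdempotentElem_natCast (k : ℕ) : IsIdempotentElem (k : F) := by
  rcases CharTwo.natCast_cases (R := F) k with h | h <;> rw [h]
  exacts [.zero, .one]

theorem IsIdempotentElem.add_of_charTwo {s t : F} (hs : IsIdempotentElem s)
    (ht : IsIdempotentElem t) : IsIdempotentElem (s + t) := by
  rw [IsIdempotentElem, CharTwo.add_mul_self, hs.eq, ht.eq]

variable [DecidableEq F]

theorem eps_add {s t : F} (hs : IsIdempotentElem s) (ht : IsIdempotentElem t) :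
    eps (s + t) = eps s * eps t := by
  rcases IsIdempotentElem.iff_eq_zero_or_one.mp hs with rfl | rfl <;>
  rcases IsIdempotentElem.iff_eq_zero_or_one.mp ht with rfl | rfl <;>
  simp [CharTwo.add_self_eq_zero]

theorem eps_add_one {s : F} (hs : IsIdempotentElem s) : eps (s + 1) = -eps s := by
  rw [eps_add hs .one, eps_one, mul_neg_one]

end CharTwo

theorem card_nthRootsFinset_le {R : Type*} [CommRing R] [IsDomain R] (n : ℕ) (a : R) :
    #(nthRootsFinset n a) ≤ n := by
  classical
  exact (nthRootsFinset_def n a ▸ Multiset.toFinset_card_le _).trans (card_nthRoots n a)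

section FiniteField

variable {F : Type*} [Field F] [Fintype F] {m : ℕ}

theorem pow_two_pow_pow_two_pow (hcard : Fintype.card F = 2 ^ (2 * m)) (x : F) :
    (x ^ 2 ^ m) ^ 2 ^ m = x := by
  rw [← pow_mul, ← pow_add, ← two_mul, ← hcard, FiniteField.pow_card]

theorem mul_pow_two_pow_pow_two_pow (hcard : Fintype.card F = 2 ^ (2 * m)) (x : F) :
    (x * x ^ 2 ^ m) ^ 2 ^ m = x * x ^ 2 ^ m := by
  rw [mul_pow, pow_two_pow_pow_two_pow hcard, mul_comm]

section CharTwo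

variable [CharP F 2]

theorem isIdempotentElem_trN (hcard : Fintype.card F = 2 ^ (2 * m)) (x : F) :
    IsIdempotentElem (trN m x) :=
  isIdempotentElem_trM (k := 2 * m) (hcard ▸ FiniteField.pow_card x)

theorem trN_pow_two_pow (hcard : Fintype.card F = 2 ^ (2 * m)) (x : F) :
    trN m (x ^ 2 ^ m) = trN m x := by
  rw [trN_eq_trM_add_pow, trN_eq_trM_add_pow, pow_two_pow_pow_two_pow hcard, add_comm]

end CharTwo

variable [DecidableEq F]

variable (F m) in
def subfieldFinset : Finset F := {x | x ^ 2 ^ m = x}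

variable (F m) in
def unitCircle : Finset F := {u | u ^ (2 ^ m + 1) = 1}

theorem mem_subfieldFinset {x : F} : x ∈ subfieldFinset F m ↔ x ^ 2 ^ m = x := by
  simp [subfieldFinset]

theorem zero_mem_subfieldFinset : (0 : F) ∈ subfieldFinset F m :=
  mem_subfieldFinset.mpr (zero_pow (by positivity))

theorem mem_unitCircle {u : F} : u ∈ unitCircle F m ↔ u ^ (2 ^ m + 1) = 1 := by
  simp [unitCircle]

theorem mul_mem_subfieldFinset {x y : F} (hx : x ∈ subfieldFinset F m)
    (hy : y ∈ subfieldFinset F m) : x * y ∈ subfieldFinset F m := by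
  rw [mem_subfieldFinset] at *
  rw [mul_pow, hx, hy]

theorem pow_succ_mem_subfieldFinset (hcard : Fintype.card F = 2 ^ (2 * m)) (x : F) :
    x ^ (2 ^ m + 1) ∈ subfieldFinset F m := by
  rw [mem_subfieldFinset, pow_succ, mul_comm]
  exact mul_pow_two_pow_pow_two_pow hcard x

theorem pow_sub_one_eq_one {z : F} (hz : z ∈ (subfieldFinset F m).erase 0) :
    z ^ (2 ^ m - 1) = 1 := by
  obtain ⟨hz0, hz⟩ := mem_erase.mp hz
  rw [mem_subfieldFinset] at hz
  refine mul_right_cancel₀ hz0 ?_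
  rw [pow_sub_one_mul (by positivity), hz, one_mul]

theorem ne_zero_of_mem_unitCircle {u : F} (hu : u ∈ unitCircle F m) : u ≠ 0 := by
  rintro rfl
  simp [mem_unitCircle] at hu

theorem pow_two_pow_eq_inv {u : F} (hu : u ∈ unitCircle F m) : u ^ 2 ^ m = u⁻¹ :=
  eq_inv_of_mul_eq_one_left (by rw [← pow_succ]; exact mem_unitCircle.mp hu)

theorem pow_sub_one_eq_inv_sq {u : F} (hu : u ∈ unitCircle F m) : u ^ (2 ^ m - 1) = (u ^ 2)⁻¹ :=
  eq_inv_of_mul_eq_one_left <| by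
    rw [← pow_add, show 2 ^ m - 1 + 2 = 2 ^ m + 1 by have := Nat.one_le_two_pow (n := m); omega]
    exact mem_unitCircle.mp hu

theorem mul_pow_succ_of_mem {z u : F} (hz : z ∈ subfieldFinset F m) (hu : u ∈ unitCircle F m) :
    (z * u) ^ (2 ^ m + 1) = z ^ 2 := by
  rw [mem_subfieldFinset] at hz
  rw [mem_unitCircle] at hu
  rw [mul_pow, hu, mul_one, pow_succ, hz, sq]

variable [CharP F 2]

theorem add_mem_subfieldFinset {x y : F} (hx : x ∈ subfieldFinset F m)
    (hy : y ∈ subfieldFinset F m) : x + y ∈ subfieldFinset F m := by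
  rw [mem_subfieldFinset] at *
  rw [add_pow_char_pow, hx, hy]

theorem add_pow_two_pow_mem_subfieldFinset (hcard : Fintype.card F = 2 ^ (2 * m)) (y : F) :
    y + y ^ 2 ^ m ∈ subfieldFinset F m := by
  rw [mem_subfieldFinset, add_pow_char_pow, pow_two_pow_pow_two_pow hcard, add_comm]

theorem exists_mul_eq_of_ne_zero (hcard : Fintype.card F = 2 ^ (2 * m)) {x : F} (hx : x ≠ 0) :
    ∃ z ∈ (subfieldFinset F m).erase 0, ∃ u ∈ unitCircle F m, z * u = x := by
  -- `z` is the square root of the norm `x ^ (2 ^ m + 1)` of `x`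
  set z := (frobeniusEquiv F 2).symm (x ^ (2 ^ m + 1))
  have hz2 : z ^ 2 = x ^ (2 ^ m + 1) := frobenius_apply_frobeniusEquiv_symm F 2 _
  have hz0 : z ≠ 0 := by
    rintro hz
    rw [hz, zero_pow two_ne_zero] at hz2
    exact pow_ne_zero _ hx hz2.symm
  have hzK : z ∈ subfieldFinset F m := by
    rw [mem_subfieldFinset, ← CharTwo.sq_inj, ← pow_mul, mul_comm, pow_mul, hz2,
      ← mem_subfieldFinset]
    exact pow_succ_mem_subfieldFinset hcard x
  refine ⟨z, mem_erase.mpr ⟨hz0, hzK⟩, x * z⁻¹, ?_, by field_simp⟩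
  rw [mem_unitCircle, mul_pow, inv_pow, pow_succ z, mem_subfieldFinset.mp hzK, ← sq, hz2,
    mul_inv_cancel₀ (pow_ne_zero _ hx)]

theorem sum_product_unitCircle_mul (hcard : Fintype.card F = 2 ^ (2 * m)) {M : Type*}
    [AddCommMonoid M] (f : F → M) :
    ∑ p ∈ (subfieldFinset F m).erase 0 ×ˢ unitCircle F m, f (p.1 * p.2) =
      ∑ x ∈ univ.erase 0, f x := by
  refine sum_nbij (fun p ↦ p.1 * p.2) ?_ ?_ ?_ fun _ _ ↦ rfl
  · rintro ⟨z, u⟩ hp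
    obtain ⟨hz, hu⟩ := mem_product.mp hp
    exact mem_erase.mpr ⟨mul_ne_zero (ne_of_mem_erase hz) (ne_zero_of_mem_unitCircle hu),
      mem_univ _⟩
  · rintro ⟨z, u⟩ hp ⟨z', u'⟩ hp' (h : z * u = z' * u')
    obtain ⟨hz, hu⟩ := mem_product.mp hp
    obtain ⟨hz', hu'⟩ := mem_product.mp hp'
    have hzz : z = z' := CharTwo.sq_inj.mp <| by
      rw [← mul_pow_succ_of_mem (mem_of_mem_erase hz) hu,
        ← mul_pow_succ_of_mem (mem_of_mem_erase hz') hu', h]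
    subst hzz
    simp [mul_left_cancel₀ (ne_of_mem_erase hz) h]
  · intro x hx
    obtain ⟨z, hz, u, hu, rfl⟩ := exists_mul_eq_of_ne_zero hcard (ne_of_mem_erase hx)
    exact ⟨(z, u), mem_product.mpr ⟨hz, hu⟩, rfl⟩

end FiniteField

section Counting

variable {F : Type*} [Field F] [Fintype F] [DecidableEq F] {m : ℕ}

theorem card_erase_zero_subfieldFinset_le (hm : 0 < m) :
    #((subfieldFinset F m).erase 0) ≤ 2 ^ m - 1 := by
  refine (card_le_card fun z hz ↦ ?_).trans (card_nthRootsFinset_le _ (1 : F))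
  rw [mem_nthRootsFinset (by simpa using Nat.one_lt_two_pow hm.ne')]
  exact pow_sub_one_eq_one hz

theorem card_unitCircle_le : #(unitCircle F m) ≤ 2 ^ m + 1 := by
  refine (card_le_card fun u hu ↦ ?_).trans (card_nthRootsFinset_le _ (1 : F))
  rwa [mem_nthRootsFinset (by positivity), ← mem_unitCircle]

variable [CharP F 2]

theorem card_erase_zero_mul_card_unitCircle (hcard : Fintype.card F = 2 ^ (2 * m)) :
    #((subfieldFinset F m).erase 0) * #(unitCircle F m) = (2 ^ m - 1) * (2 ^ m + 1) := by
  have h := sum_product_unitCircle_mul hcard (fun _ ↦ 1)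
  simp only [sum_const, card_product, smul_eq_mul, mul_one] at h
  rw [h, card_erase_of_mem (mem_univ 0), card_univ, hcard]
  zify [Nat.one_le_two_pow (n := 2 * m), Nat.one_le_two_pow (n := m)]
  ring

theorem card_erase_zero_subfieldFinset (hm : 0 < m) (hcard : Fintype.card F = 2 ^ (2 * m)) :
    #((subfieldFinset F m).erase 0) = 2 ^ m - 1 := by
  refine Nat.eq_of_mul_eq_mul_right (m := 2 ^ m + 1) (Nat.succ_pos _) <|
    le_antisymm (Nat.mul_le_mul_right _ (card_erase_zero_subfieldFinset_le hm)) ?_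
  calc (2 ^ m - 1) * (2 ^ m + 1)
      = #((subfieldFinset F m).erase 0) * #(unitCircle F m) :=
        (card_erase_zero_mul_card_unitCircle hcard).symm
    _ ≤ _ := Nat.mul_le_mul_left _ card_unitCircle_le

theorem card_unitCircle (hm : 0 < m) (hcard : Fintype.card F = 2 ^ (2 * m)) :
    #(unitCircle F m) = 2 ^ m + 1 := by
  have h := card_erase_zero_mul_card_unitCircle hcard
  rw [card_erase_zero_subfieldFinset hm hcard] at h
  exact Nat.eq_of_mul_eq_mul_left (by have := Nat.one_lt_two_pow hm.ne'; omega) h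

theorem card_subfieldFinset (hm : 0 < m) (hcard : Fintype.card F = 2 ^ (2 * m)) :
    #(subfieldFinset F m) = 2 ^ m := by
  rw [← card_erase_add_one zero_mem_subfieldFinset, card_erase_zero_subfieldFinset hm hcard,
    Nat.sub_add_cancel Nat.one_le_two_pow]

end Counting

section Balanced

variable {F : Type*} [Field F] [Fintype F] [DecidableEq F] [CharP F 2] {m : ℕ}

theorem exists_trM_eq_one (hm : 0 < m) (hcard : Fintype.card F = 2 ^ (2 * m)) :
    ∃ z ∈ subfieldFinset F m, trM m z = 1 := by
  by_contra! h
  have hzero : (∑ i ∈ range m, X ^ 2 ^ i : F[X]) = 0 := by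
    refine eq_zero_of_natDegree_lt_card_of_eval_eq_zero' _ (subfieldFinset F m) (fun z hz ↦ ?_) ?_
    · rw [eval_sum_X_pow_two_pow]
      exact (IsIdempotentElem.iff_eq_zero_or_one.mp
        (isIdempotentElem_trM (mem_subfieldFinset.mp hz))).resolve_right (h z hz)
    · refine (natDegree_sum_le_of_forall_le _ _ (n := 2 ^ (m - 1)) fun i hi ↦ ?_).trans_lt ?_
      · rw [natDegree_X_pow]
        exact Nat.pow_le_pow_right two_pos (by simp at hi; omega)
      · rw [card_subfieldFinset hm hcard]
        exact Nat.pow_lt_pow_right one_lt_two (by omega)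
  have := congr_arg (coeff · 1) hzero
  simp [finsetSum_coeff, coeff_X_pow, eq_comm (a := 1), hm] at this

theorem sum_eps_trM_subfieldFinset (hm : 0 < m) (hcard : Fintype.card F = 2 ^ (2 * m)) :
    ∑ z ∈ subfieldFinset F m, eps (trM m z) = 0 := by
  obtain ⟨w, hw, htr⟩ := exists_trM_eq_one hm hcard
  have hflip : ∑ z ∈ subfieldFinset F m, eps (trM m (z + w)) =
      ∑ z ∈ subfieldFinset F m, eps (trM m z) := by
    refine sum_nbij' (· + w) (· + w) (fun z hz ↦ add_mem_subfieldFinset hz hw)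
      (fun z hz ↦ add_mem_subfieldFinset hz hw) (fun z _ ↦ ?_) (fun z _ ↦ ?_) fun _ _ ↦ rfl <;>
    simp [add_assoc, CharTwo.add_self_eq_zero]
  have hneg : ∑ z ∈ subfieldFinset F m, eps (trM m (z + w)) =
      -∑ z ∈ subfieldFinset F m, eps (trM m z) := by
    rw [← sum_neg_distrib]
    refine sum_congr rfl fun z hz ↦ ?_
    rw [trM_add, htr, eps_add_one (isIdempotentElem_trM (mem_subfieldFinset.mp hz))]
  linarith

theorem sum_erase_zero_eps_trM_mul (hm : 0 < m) (hcard : Fintype.card F = 2 ^ (2 * m)) {c : F}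
    (hc : c ∈ subfieldFinset F m) :
    ∑ z ∈ (subfieldFinset F m).erase 0, eps (trM m (z * c)) = if c = 0 then 2 ^ m - 1 else -1 := by
  split_ifs with hc0
  · simp [hc0, card_erase_zero_subfieldFinset hm hcard, Nat.cast_sub Nat.one_le_two_pow]
  have hscale : ∑ z ∈ subfieldFinset F m, eps (trM m (z * c)) =
      ∑ z ∈ subfieldFinset F m, eps (trM m z) := by
    refine sum_nbij' (· * c) (· * c⁻¹) (fun z hz ↦ mul_mem_subfieldFinset hz hc)
      (fun z hz ↦ mul_mem_subfieldFinset hz ?_) (fun z _ ↦ ?_) (fun z _ ↦ ?_) fun _ _ ↦ rfl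
    · rw [mem_subfieldFinset, inv_pow, mem_subfieldFinset.mp hc]
    all_goals simp [hc0]
  rw [sum_erase_eq_sub zero_mem_subfieldFinset, hscale, sum_eps_trM_subfieldFinset hm hcard]
  simp

end Balanced

section CharacterSums

variable {F : Type*} [Field F] [Fintype F] [DecidableEq F] [CharP F 2] {m : ℕ}

theorem sum_eps_trM_pow_succ (hm : 0 < m) (hcard : Fintype.card F = 2 ^ (2 * m)) :
    ∑ y : F, eps (trM m (y ^ (2 ^ m + 1))) = -2 ^ m := by
  rw [← add_sum_erase univ _ (mem_univ 0), ← sum_product_unitCircle_mul hcard, sum_product]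
  have hterm : ∀ z ∈ (subfieldFinset F m).erase 0, ∀ u ∈ unitCircle F m,
      eps (trM m ((z * u) ^ (2 ^ m + 1))) = eps (trM m (z * 1)) := fun z hz u hu ↦ by
    rw [mul_pow_succ_of_mem (mem_of_mem_erase hz) hu, mul_one,
      trM_sq_of_pow_eq (mem_subfieldFinset.mp (mem_of_mem_erase hz))]
  rw [sum_congr rfl fun z hz ↦ sum_congr rfl (hterm z hz)]
  simp only [sum_const, card_unitCircle hm hcard, ← smul_sum,
    sum_erase_zero_eps_trM_mul hm hcard (mem_subfieldFinset.mpr (one_pow _))]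
  simp

theorem trN_mul_pow_succ_add_trN_mul (hcard : Fintype.card F = 2 ^ (2 * m)) {l : F}
    (hl : l + l ^ 2 ^ m = 1) (b x : F) :
    trN m (l * x ^ (2 ^ m + 1)) + trN m (b * x) =
      trM m ((x + b ^ 2 ^ m) ^ (2 ^ m + 1)) + trM m (b * b ^ 2 ^ m) := by
  have hN := mem_subfieldFinset.mp (pow_succ_mem_subfieldFinset hcard x)
  rw [trN_eq_trM_add_pow, trN_eq_trM_add_pow, ← trM_add, ← trM_add, mul_pow, hN]
  congr 1
  rw [pow_succ (x + _), add_pow_char_pow, pow_two_pow_pow_two_pow hcard, mul_pow b x, pow_succ x]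
  linear_combination (x ^ 2 ^ m * x) * hl - b * b ^ 2 ^ m * CharTwo.two_eq_zero (R := F)

theorem sum_eps_trN_mul_pow_succ_add (hm : 0 < m) (hcard : Fintype.card F = 2 ^ (2 * m))
    {l : F} (hl : l + l ^ 2 ^ m = 1) (b : F) :
    ∑ x : F, eps (trN m (l * x ^ (2 ^ m + 1)) + trN m (b * x)) =
      -2 ^ m * eps (trM m (b * b ^ 2 ^ m)) := by
  have hb := mul_pow_two_pow_pow_two_pow hcard b
  simp_rw [trN_mul_pow_succ_add_trN_mul hcard hl b, eps_add
    (isIdempotentElem_trM (mem_subfieldFinset.mp (pow_succ_mem_subfieldFinset hcard _)))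
    (isIdempotentElem_trM hb), ← sum_mul]
  rw [Fintype.sum_equiv (Equiv.addRight (b ^ 2 ^ m))
    (fun x ↦ eps (trM m ((x + b ^ 2 ^ m) ^ (2 ^ m + 1))))
    (fun y ↦ eps (trM m (y ^ (2 ^ m + 1)))) fun _ ↦ rfl,
    sum_eps_trM_pow_succ hm hcard]

theorem eps_trN_mul_pow_sub_one_add_of_mem (hcard : Fintype.card F = 2 ^ (2 * m)) {z u : F}
    (hz : z ∈ (subfieldFinset F m).erase 0) (μ b : F) :
    eps (trN m (μ * (z * u) ^ (2 ^ m - 1)) + trN m (b * (z * u))) =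
      eps (trN m (μ * u ^ (2 ^ m - 1))) * eps (trM m (z * (b * u + (b * u) ^ 2 ^ m))) := by
  have hzK := mem_of_mem_erase hz
  have htr : trN m (b * (z * u)) = trM m (z * (b * u + (b * u) ^ 2 ^ m)) := by
    rw [trN_eq_trM_add_pow, mul_left_comm, mul_pow z, mem_subfieldFinset.mp hzK, mul_add]
  rw [mul_pow z, pow_sub_one_eq_one hz, one_mul, htr, eps_add (isIdempotentElem_trN hcard _)
    (isIdempotentElem_trM (mem_subfieldFinset.mp
      (mul_mem_subfieldFinset hzK (add_pow_two_pow_mem_subfieldFinset hcard _))))]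

theorem mem_unitCircle_and_add_pow_eq_zero_iff (hcard : Fintype.card F = 2 ^ (2 * m)) {b : F}
    (hb : b ≠ 0) {u : F} :
    u ∈ unitCircle F m ∧ b * u + (b * u) ^ 2 ^ m = 0 ↔ u ^ 2 = b ^ 2 ^ m * b⁻¹ := by
  have hbq : b ^ 2 ^ m ≠ 0 := pow_ne_zero _ hb
  constructor
  · rintro ⟨hu, h⟩
    have hu0 := ne_zero_of_mem_unitCircle hu
    rw [mul_pow, pow_two_pow_eq_inv hu] at h
    field_simp at h ⊢
    linear_combination h - b ^ 2 ^ m * CharTwo.two_eq_zero (R := F)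
  · intro h
    have hu0 : u ≠ 0 := by
      rintro rfl
      simp [hb, hbq] at h
    have hu : u ∈ unitCircle F m := by
      rw [mem_unitCircle, ← CharTwo.sq_inj, one_pow, ← pow_mul, mul_comm, pow_mul, h, pow_succ,
        mul_pow, inv_pow, pow_two_pow_pow_two_pow hcard]
      field_simp
    refine ⟨hu, mul_right_cancel₀ hu0 ?_⟩
    rw [mul_pow, add_mul, mul_assoc, mul_assoc, ← pow_succ, mem_unitCircle.mp hu, ← sq, h]
    field_simp
    linear_combination b ^ 2 ^ m * CharTwo.two_eq_zero (R := F)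

theorem sum_filter_eps_trN_mul_pow_sub_one (hcard : Fintype.card F = 2 ^ (2 * m)) {μ : F}
    (hμ : μ ^ 2 ^ m = μ) {b : F} (hb : b ≠ 0) :
    ∑ u ∈ unitCircle F m with b * u + (b * u) ^ 2 ^ m = 0, eps (trN m (μ * u ^ (2 ^ m - 1))) =
      eps (trN m (μ * b ^ 2 ^ m * b⁻¹)) := by
  set r := (frobeniusEquiv F 2).symm (b ^ 2 ^ m * b⁻¹)
  have hr : r ^ 2 = b ^ 2 ^ m * b⁻¹ := frobenius_apply_frobeniusEquiv_symm F 2 _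
  have hfilter : {u ∈ unitCircle F m | b * u + (b * u) ^ 2 ^ m = 0} = {r} := by
    ext u
    rw [mem_filter, mem_unitCircle_and_add_pow_eq_zero_iff hcard hb, mem_singleton, ← hr,
      CharTwo.sq_inj]
  have hrU := ((mem_unitCircle_and_add_pow_eq_zero_iff hcard hb).mpr hr).1
  rw [hfilter, sum_singleton, pow_sub_one_eq_inv_sq hrU, hr,
    ← trN_pow_two_pow hcard (μ * b ^ 2 ^ m * b⁻¹), mul_pow, mul_pow, hμ,
    pow_two_pow_pow_two_pow hcard, inv_pow]
  field_simp

theorem sum_eps_trN_mul_pow_sub_one_add (hm : 0 < m) (hcard : Fintype.card F = 2 ^ (2 * m))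
    {μ : F} (hμ : μ ^ 2 ^ m = μ) {b : F} (hb : b ≠ 0) :
    ∑ x : F, eps (trN m (μ * x ^ (2 ^ m - 1)) + trN m (b * x)) =
      1 + 2 ^ m * eps (trN m (μ * b ^ 2 ^ m * b⁻¹)) -
        ∑ u ∈ unitCircle F m, eps (trN m (μ * u ^ (2 ^ m - 1))) := by
  have hq : 2 ^ m - 1 ≠ 0 := by have := Nat.one_lt_two_pow hm.ne'; omega
  have hinner : ∀ u ∈ unitCircle F m,
      ∑ z ∈ (subfieldFinset F m).erase 0,
          eps (trN m (μ * (z * u) ^ (2 ^ m - 1)) + trN m (b * (z * u))) =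
        2 ^ m * (if b * u + (b * u) ^ 2 ^ m = 0 then eps (trN m (μ * u ^ (2 ^ m - 1))) else 0) -
          eps (trN m (μ * u ^ (2 ^ m - 1))) := fun u _ ↦ by
    rw [sum_congr rfl fun z hz ↦ eps_trN_mul_pow_sub_one_add_of_mem hcard hz μ b, ← mul_sum,
      sum_erase_zero_eps_trM_mul hm hcard (add_pow_two_pow_mem_subfieldFinset hcard _)]
    split_ifs <;> ring
  rw [← add_sum_erase univ _ (mem_univ 0), ← sum_product_unitCircle_mul hcard, sum_product_right,
    sum_congr rfl hinner, sum_sub_distrib, ← mul_sum, ← sum_filter,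
    sum_filter_eps_trN_mul_pow_sub_one hcard hμ hb, zero_pow hq, mul_zero, mul_zero, trN_zero,
    add_zero, eps_zero]
  ring

end CharacterSums

section Walsh

variable {F : Type*} [Field F] [DecidableEq F] [CharP F 2]

theorem two_mul_eps_select {t A M B : F} (ht : IsIdempotentElem t) (hA : IsIdempotentElem A)
    (hM : IsIdempotentElem M) (hB : IsIdempotentElem B) :
    2 * eps ((1 + t) * A + t * M + B) =
      (eps (A + B) + eps (A + B + t)) + (eps (M + B) - eps (M + B + t)) := by
  rcases IsIdempotentElem.iff_eq_zero_or_one.mp ht with rfl | rfl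
  · simp only [add_zero, one_mul, zero_mul]
    ring
  · rw [CharTwo.add_self_eq_zero, eps_add_one (hA.add_of_charTwo hB),
      eps_add_one (hM.add_of_charTwo hB)]
    simp only [zero_mul, zero_add, one_mul]
    ring

variable [Fintype F] {m : ℕ}

theorem two_mul_walsh_gFun (hm : 0 < m) (hcard : Fintype.card F = 2 ^ (2 * m)) {l : F}
    (hl : l + l ^ 2 ^ m = 1) {μ : F} (hμ : μ ^ 2 ^ m = μ) {a : F} (ha0 : a ≠ 0) (ha1 : a ≠ 1) :
    2 * walsh m (gFun m l μ) a =
      -2 ^ m * (eps (trM m (a * a ^ 2 ^ m)) + eps (trM m ((a + 1) * (a + 1) ^ 2 ^ m))) +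
        2 ^ m * (eps (trN m (μ * a ^ 2 ^ m * a⁻¹)) -
          eps (trN m (μ * (a + 1) ^ 2 ^ m * (a + 1)⁻¹))) := by
  have ha1' : a + 1 ≠ 0 := fun h ↦ ha1 (CharTwo.add_eq_zero.mp h)
  have hI := isIdempotentElem_trN hcard
  have hpt : ∀ x : F, 2 * eps (gFun m l μ x + trN m (a * x)) =
      (eps (trN m (l * x ^ (2 ^ m + 1)) + trN m (a * x)) +
          eps (trN m (l * x ^ (2 ^ m + 1)) + trN m ((a + 1) * x))) +
        (eps (trN m (μ * x ^ (2 ^ m - 1)) + trN m (a * x)) -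
          eps (trN m (μ * x ^ (2 ^ m - 1)) + trN m ((a + 1) * x))) := fun x ↦ by
    rw [add_one_mul, trN_add, ← add_assoc, ← add_assoc]
    exact two_mul_eps_select (hI _) (hI _) (hI _) (hI _)
  rw [walsh, mul_sum, sum_congr rfl fun x _ ↦ hpt x, sum_add_distrib, sum_add_distrib,
    sum_sub_distrib, sum_eps_trN_mul_pow_succ_add hm hcard hl,
    sum_eps_trN_mul_pow_succ_add hm hcard hl, sum_eps_trN_mul_pow_sub_one_add hm hcard hμ ha0,
    sum_eps_trN_mul_pow_sub_one_add hm hcard hμ ha1']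
  ring

theorem walsh_gFun (hm : 0 < m) (hcard : Fintype.card F = 2 ^ (2 * m)) {l : F}
    (hl : l + l ^ 2 ^ m = 1) {μ : F} (hμ : μ ^ 2 ^ m = μ) {a : F} (ha0 : a ≠ 0) (ha1 : a ≠ 1) :
    walsh m (gFun m l μ) a =
      2 ^ (m - 1) * (eps (trN m (μ * a ^ 2 ^ m * a⁻¹)) -
        eps (trN m (μ * (a ^ 2 ^ m + 1) * (a + 1)⁻¹)) -
          eps (trM m (a * a ^ 2 ^ m)) * (1 + eps (trN m a + m))) := by
  have hW := two_mul_walsh_gFun hm hcard hl hμ ha0 ha1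
  have hq : (2 : ℤ) ^ m = 2 * 2 ^ (m - 1) := by rw [← pow_succ', Nat.sub_add_cancel hm]
  rw [trM_add_one_mul_pow_add_one, add_pow_char_pow, one_pow, hq,
    eps_add (isIdempotentElem_trM (mul_pow_two_pow_pow_two_pow hcard a))
      ((isIdempotentElem_trN hcard a).add_of_charTwo (isIdempotentElem_natCast m))] at hW
  refine mul_left_cancel₀ (two_ne_zero (α := ℤ)) (hW.trans ?_)
  ring

end Walsh

theorem stmt18_general (m : ℕ) (hm : 0 < m) (F : Type*) [Field F] [Fintype F] [DecidableEq F]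
    (hcard : Fintype.card F = 2 ^ (2 * m))
    (l : F) (hl : l + l ^ (2 ^ m) = 1)
    (μ : F) (hμK : μ ^ (2 ^ m) = μ)
    (a : F) (ha0 : a ≠ 0) (ha1 : a ≠ 1)
    (C : ℤ)
    (hC : C = eps (trN m (μ * a ^ (2 ^ m) * a⁻¹)) -
      eps (trN m (μ * (a ^ (2 ^ m) + 1) * (a + 1)⁻¹))) :
    (trN m a = (m : F) → trM m (a * a ^ (2 ^ m)) = 0 →
      walsh m (gFun m l μ) a = (2 ^ (m - 1) : ℤ) * (C - 2)) ∧
    (trN m a = (m : F) → trM m (a * a ^ (2 ^ m)) = 1 →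
      walsh m (gFun m l μ) a = (2 ^ (m - 1) : ℤ) * (C + 2)) ∧
    (trN m a ≠ (m : F) →
      walsh m (gFun m l μ) a = (2 ^ (m - 1) : ℤ) * C) := by
  have : CharP F 2 := charP_of_card_eq_prime_pow hcard
  rw [walsh_gFun hm hcard hl hμK ha0 ha1, ← hC]
  refine ⟨fun htr htrM ↦ ?_, fun htr htrM ↦ ?_, fun htr ↦ ?_⟩
  · rw [CharTwo.add_eq_zero.mpr htr, htrM, eps_zero]
    ring
  · rw [CharTwo.add_eq_zero.mpr htr, htrM, eps_zero, eps_one]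
    ring
  · rw [eps_of_ne_zero (mt CharTwo.add_eq_zero.mp htr)]
    ring

theorem stmt18 (m : ℕ) (hm : 0 < m) (F : Type*) [Field F] [Fintype F] [DecidableEq F]
    (hcard : Fintype.card F = 2 ^ (2 * m))
    (l : F) (hl : l + l ^ (2 ^ m) = 1)
    (μ : F) (hμK : μ ^ (2 ^ m) = μ) (hμ0 : μ ≠ 0)
    (a : F) (ha0 : a ≠ 0) (ha1 : a ≠ 1)
    (C : ℤ)
    (hC : C = eps (trN m (μ * a ^ (2 ^ m) * a⁻¹)) -
      eps (trN m (μ * (a ^ (2 ^ m) + 1) * (a + 1)⁻¹))) :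
    (trN m a = (m : F) → trM m (a * a ^ (2 ^ m)) = 0 →
      walsh m (gFun m l μ) a = (2 ^ (m - 1) : ℤ) * (C - 2)) ∧
    (trN m a = (m : F) → trM m (a * a ^ (2 ^ m)) = 1 →
      walsh m (gFun m l μ) a = (2 ^ (m - 1) : ℤ) * (C + 2)) ∧
    (trN m a ≠ (m : F) →
      walsh m (gFun m l μ) a = (2 ^ (m - 1) : ℤ) * C) :=
  stmt18_general m hm F hcard l hl μ hμK a ha0 ha1 C hC
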